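/- Let n ≥ 1 and let T : ℂⁿ → ℂⁿ be a linear map. The following assertions are equivalent: (a) T is recurrent; (b) T is uniformly recurrent; (c) T is IP*-recurrent; (d) T is similar to a diagonal matrix with unimodular diagonal entries, i.e. there is an invertible linear map S : ℂⁿ → ℂⁿ such that S⁻¹TS is diagonal with all diagonal entries of modulus 1. In that case, every vector in ℂⁿ is IP*-recurrent for T. -/

import Mathlib

/-!
IP*-sets are syndetic (a set with arbitrarily long gaps misses an IP-set built inside its gaps)
and syndetic sets are infinite, so IP*-recurrence implies uniform recurrence implies recurrence.

If the recurrent vectors are dense, each of them lies in the span of the eigenvectors with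
unimodular eigenvalues: its components in the generalized eigenspaces are again recurrent, an
eigenvector with eigenvalue `|μ| ≠ 1` has an orbit tending to `0` or to `∞`, and for a Jordan
chain `T w = μ w + z`, `T z = μ z` with `|μ| = 1` the orbit of `w` grows like `k ‖z‖`. That span is
closed, hence everything, and `T` is diagonalizable with unimodular eigenvalues.

For such `T` the orbit of a vector is a continuous image of the orbit of a rotation of the compact
torus, and the return times of a compact group rotation to a neighbourhood of `1` form an IP*-set.
-/

open Filter Topology Set

noncomputable def lowerDensity (A : Set ℕ) : ℝ :=
  Filter.atTop.liminf fun N : ℕ => ((A ∩ Set.Iic N).ncard : ℝ) / (N + 1)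

noncomputable def upperDensity (A : Set ℕ) : ℝ :=
  Filter.atTop.limsup fun N : ℕ => ((A ∩ Set.Iic N).ncard : ℝ) / (N + 1)

noncomputable def upperBanachDensity (A : Set ℕ) : ℝ :=
  Filter.atTop.limsup fun N : ℕ =>
    ⨆ m : ℕ, (((A ∩ Set.Icc m (m + N)).ncard : ℝ) / (N + 1))

/-- A set of naturals is syndetic if it has bounded gaps. -/
def Syndetic (A : Set ℕ) : Prop :=
  ∃ m : ℕ, ∀ n : ℕ, ∃ k ∈ A, n ≤ k ∧ k < n + m

/-- A set of naturals is an IP-set if it contains all finite sums of distinct terms of some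
strictly increasing sequence of positive integers. -/
def IsIPSet (A : Set ℕ) : Prop :=
  ∃ k : ℕ → ℕ, StrictMono k ∧ (∀ i, 0 < k i) ∧
    ∀ s : Finset ℕ, s.Nonempty → (∑ j ∈ s, k j) ∈ A

/-- A set of naturals is an IP*-set if it meets every IP-set. -/
def IsIPStarSet (A : Set ℕ) : Prop :=
  ∀ B : Set ℕ, IsIPSet B → (A ∩ B).Nonempty

/-- The return set N(x,U) = {n : T^n x ∈ U}. -/
def returnSet {X : Type*} (T : X → X) (x : X) (U : Set X) : Set ℕ :=
  {n : ℕ | T^[n] x ∈ U}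

def IsRecurrentVec {X : Type*} [TopologicalSpace X] (T : X → X) (x : X) : Prop :=
  ∀ U ∈ nhds x, (returnSet T x U).Infinite

def IsUniformlyRecurrentVec {X : Type*} [TopologicalSpace X] (T : X → X) (x : X) : Prop :=
  ∀ U ∈ nhds x, Syndetic (returnSet T x U)

def IsFrequentlyRecurrentVec {X : Type*} [TopologicalSpace X] (T : X → X) (x : X) : Prop :=
  ∀ U ∈ nhds x, 0 < lowerDensity (returnSet T x U)

def IsUpperFrequentlyRecurrentVec {X : Type*} [TopologicalSpace X] (T : X → X) (x : X) : Prop :=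
  ∀ U ∈ nhds x, 0 < upperDensity (returnSet T x U)

def IsReiterativelyRecurrentVec {X : Type*} [TopologicalSpace X] (T : X → X) (x : X) : Prop :=
  ∀ U ∈ nhds x, 0 < upperBanachDensity (returnSet T x U)

def IsIPStarRecurrentVec {X : Type*} [TopologicalSpace X] (T : X → X) (x : X) : Prop :=
  ∀ U ∈ nhds x, IsIPStarSet (returnSet T x U)

def IsHypercyclicVec {X : Type*} [TopologicalSpace X] (T : X → X) (x : X) : Prop :=
  Dense (Set.range fun n : ℕ => T^[n] x)

def IsFrequentlyHypercyclicVec {X : Type*} [TopologicalSpace X] (T : X → X) (x : X) : Prop :=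
  ∀ U : Set X, IsOpen U → U.Nonempty → 0 < lowerDensity (returnSet T x U)

def IsUpperFrequentlyHypercyclicVec {X : Type*} [TopologicalSpace X] (T : X → X) (x : X) : Prop :=
  ∀ U : Set X, IsOpen U → U.Nonempty → 0 < upperDensity (returnSet T x U)

def IsReiterativelyHypercyclicVec {X : Type*} [TopologicalSpace X] (T : X → X) (x : X) : Prop :=
  ∀ U : Set X, IsOpen U → U.Nonempty → 0 < upperBanachDensity (returnSet T x U)

/-- Power boundedness: the iterates form an equicontinuous family (at zero). -/
def PowerBounded {X : Type*} [Zero X] [TopologicalSpace X] (T : X → X) : Prop :=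
  ∀ W₁ ∈ nhds (0 : X), ∃ W₂ ∈ nhds (0 : X), ∀ n : ℕ, ∀ x ∈ W₂, T^[n] x ∈ W₁

/-- The cut-shift-and-paste property for a family of subsets of ℕ. -/
def CuSP (F : Set ℕ → Prop) : Prop :=
  ∀ q : ℕ, 0 < q → ∀ I : Fin q → Set ℕ, (⋃ j, I j) = Set.univ →
    ∀ shift : Fin q → ℕ, ∀ A : Set ℕ, F A →
      F (⋃ j, (fun k => shift j + k) '' (A ∩ I j))

theorem Syndetic.infinite {A : Set ℕ} (h : Syndetic A) : A.Infinite := by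
  obtain ⟨m, hm⟩ := h
  refine Set.infinite_of_forall_exists_gt fun a => ?_
  obtain ⟨k, hkA, hak, -⟩ := hm (a + 1)
  exact ⟨k, hkA, hak⟩

theorem IsIPStarSet.mono {A B : Set ℕ} (hA : IsIPStarSet A) (hAB : A ⊆ B) : IsIPStarSet B :=
  fun C hC => (hA C hC).mono (Set.inter_subset_inter_left C hAB)

/-- The IP-set is built from gaps `[g L, g L + L]` of `A` with `L` the sum of all earlier
generators, so that every finite sum lands in the gap of its largest generator. -/
theorem isIPSet_compl_of_not_syndetic {A : Set ℕ} (hA : ¬Syndetic A) : IsIPSet Aᶜ := by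
  have gap : ∀ L, ∃ a, L < a ∧ ∀ t ≤ L, a + t ∉ A := by
    intro L
    simp only [Syndetic, not_exists, not_forall] at hA
    obtain ⟨b, hb⟩ := hA (2 * L + 2)
    exact ⟨b + L + 1, by omega, fun t ht htA => hb _ ⟨htA, by omega, by omega⟩⟩
  choose g hgL hgA using gap
  let s : ℕ → ℕ := fun j => Nat.rec 0 (fun _ sj => sj + g sj) j
  have hs : ∀ j, s j = ∑ i ∈ Finset.range j, g (s i) := by
    intro j
    induction j with
    | zero => rfl
    | succ j ih => rw [Finset.sum_range_succ, ← ih]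
  refine ⟨fun j => g (s j), strictMono_nat_of_lt_succ fun j => ?_, fun j => ?_, fun t ht => ?_⟩
  · have := hgL (s (j + 1))
    change s j + g (s j) < g (s (j + 1)) at this
    omega
  · exact (Nat.zero_le _).trans_lt (hgL _)
  · set j := t.max' ht
    have hrest : ∑ i ∈ t.erase j, g (s i) ≤ s j := by
      rw [hs]
      refine Finset.sum_le_sum_of_subset fun i hi => Finset.mem_range.2 ?_
      obtain ⟨hij, hit⟩ := Finset.mem_erase.1 hi
      exact lt_of_le_of_ne (t.le_max' i hit) hij
    rw [Set.mem_compl_iff, ← Finset.add_sum_erase t _ (t.max'_mem ht)]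
    exact hgA _ _ hrest

theorem IsIPStarSet.syndetic {A : Set ℕ} (hA : IsIPStarSet A) : Syndetic A := by
  by_contra h
  obtain ⟨k, hkA, hkAc⟩ := hA _ (isIPSet_compl_of_not_syndetic h)
  exact hkAc hkA

/-- Two partial sums `s i < s j` of the IP-generators with `g ^ s i`, `g ^ s j` close to a common
cluster point give a finite sum `s j - s i` with `g ^ (s j - s i)` close to `1`. -/
theorem isIPStarSet_pow_mem_nhds_one {G : Type*} [Group G] [TopologicalSpace G]
    [IsTopologicalGroup G] [CompactSpace G] (g : G) {W : Set G} (hW : W ∈ 𝓝 1) :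
    IsIPStarSet {m | g ^ m ∈ W} := by
  rintro B ⟨k, -, -, hkB⟩
  let s : ℕ → ℕ := fun j => ∑ i ∈ Finset.range j, k i
  obtain ⟨a, ha⟩ : ∃ a, MapClusterPt a atTop (fun j => g ^ s j) :=
    exists_clusterPt_of_compactSpace _
  have hcont : ContinuousAt (fun p : G × G => p.1⁻¹ * p.2) (a, a) := by fun_prop
  have hW' : (fun p : G × G => p.1⁻¹ * p.2) ⁻¹' W ∈ 𝓝 a ×ˢ 𝓝 a := by
    rw [← nhds_prod_eq]
    exact hcont.preimage_mem_nhds (by simpa using hW)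
  obtain ⟨U, hU, hUW⟩ := Filter.mem_prod_self_iff.1 hW'
  have hfreq := frequently_atTop.1 (mapClusterPt_iff_frequently.1 ha U hU)
  obtain ⟨i, -, hi⟩ := hfreq 0
  obtain ⟨j, hij, hj⟩ := hfreq (i + 1)
  have hsum : s i + ∑ t ∈ Finset.Ico i j, k t = s j :=
    Finset.sum_range_add_sum_Ico k (by omega)
  refine ⟨∑ t ∈ Finset.Ico i j, k t, ?_, hkB _ (Finset.nonempty_Ico.2 (by omega))⟩
  have := hUW (Set.mk_mem_prod hi hj)
  simpa [← hsum, pow_add] using this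

theorem isRecurrentVec_iff_mapClusterPt {X : Type*} [TopologicalSpace X] {T : X → X} {x : X} :
    IsRecurrentVec T x ↔ MapClusterPt x atTop (fun k => T^[k] x) := by
  simp only [mapClusterPt_iff_frequently, Nat.frequently_atTop_iff_infinite]
  rfl

theorem IsRecurrentVec.semiconj {X Y : Type*} [TopologicalSpace X] [TopologicalSpace Y]
    {T : X → X} {S : Y → Y} {L : X → Y} {x : X} (hx : IsRecurrentVec T x) (hL : Continuous L)
    (h : Function.Semiconj L T S) : IsRecurrentVec S (L x) := by
  rw [isRecurrentVec_iff_mapClusterPt] at hx ⊢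
  have horbit : (fun k => L (T^[k] x)) = fun k => S^[k] (L x) :=
    funext fun k => h.iterate_right k x
  simpa only [Function.comp_def, horbit] using hx.continuousAt_comp hL.continuousAt

theorem not_tendsto_atTop_of_mapClusterPt {u : ℕ → ℝ} {a : ℝ} (h : MapClusterPt a atTop u) :
    ¬Tendsto u atTop atTop := fun hu =>
  let ⟨_, hk, hk'⟩ := ((h.frequently (gt_mem_nhds (lt_add_one a))).and_eventually
    (hu.eventually_ge_atTop (a + 1))).exists
  hk.not_ge hk'

theorem LinearMap.iterate_apply_eq_pow_smul {R M : Type*} [Semiring R] [AddCommMonoid M]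
    [Module R M] {T : M →ₗ[R] M} {μ : R} {x : M} (hTx : T x = μ • x) (k : ℕ) :
    T^[k] x = μ ^ k • x := by
  induction k with
  | zero => simp
  | succ k ih => rw [Function.iterate_succ_apply', ih, map_smul, hTx, smul_smul, pow_succ]

section NormedSpace

variable {𝕜 V : Type*} [NormedField 𝕜] [NormedAddCommGroup V] [NormedSpace 𝕜 V]

theorem not_isRecurrentVec_of_tendsto_norm_atTop {T : V → V} {x : V}
    (h : Tendsto (fun k => ‖T^[k] x‖) atTop atTop) : ¬IsRecurrentVec T x := fun hx =>
  not_tendsto_atTop_of_mapClusterPt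
    ((isRecurrentVec_iff_mapClusterPt.1 hx).continuousAt_comp continuous_norm.continuousAt) h

theorem IsRecurrentVec.norm_eq_one_of_apply_eq_smul {T : V →ₗ[𝕜] V} {μ : 𝕜} {x : V}
    (hx : IsRecurrentVec T x) (hTx : T x = μ • x) (hx0 : x ≠ 0) : ‖μ‖ = 1 := by
  have horbit : ∀ k, ‖T^[k] x‖ = ‖μ‖ ^ k * ‖x‖ := fun k => by
    rw [LinearMap.iterate_apply_eq_pow_smul hTx, norm_smul, norm_pow]
  have hx0' : 0 < ‖x‖ := norm_pos_iff.2 hx0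
  rcases lt_trichotomy ‖μ‖ 1 with hlt | heq | hgt
  · have hlim : Tendsto (fun k => ‖T^[k] x‖) atTop (𝓝 0) := by
      simpa [horbit] using
        (tendsto_pow_atTop_nhds_zero_of_lt_one (norm_nonneg μ) hlt).mul_const ‖x‖
    have hclust := (isRecurrentVec_iff_mapClusterPt.1 hx).continuousAt_comp
      continuous_norm.continuousAt
    obtain ⟨k, hk, hk'⟩ := ((hclust.frequently (lt_mem_nhds (half_lt_self hx0'))).and_eventually
      (hlim.eventually (gt_mem_nhds (half_pos hx0')))).exists
    exact (lt_asymm hk hk').elim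
  · exact heq
  · refine absurd hx (not_isRecurrentVec_of_tendsto_norm_atTop ?_)
    simpa only [horbit] using (tendsto_pow_atTop_atTop_of_one_lt hgt).atTop_mul_const hx0'

end NormedSpace

theorem not_isRecurrentVec_of_apply_eq_smul_add {𝕜 V : Type*} [RCLike 𝕜] [NormedAddCommGroup V]
    [NormedSpace 𝕜 V] {T : V →ₗ[𝕜] V} {μ : 𝕜} {z w : V} (hμ : ‖μ‖ = 1) (hTz : T z = μ • z)
    (hTw : T w = μ • w + z) (hz0 : z ≠ 0) : ¬IsRecurrentVec T w := by
  have horbit : ∀ k : ℕ, μ • T^[k] w = μ ^ k • (μ • w + (k : 𝕜) • z) := by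
    intro k
    induction k with
    | zero => simp
    | succ k ih =>
      rw [Function.iterate_succ_apply', ← map_smul, ih, map_smul, map_add, map_smul, map_smul,
        hTw, hTz]
      push_cast
      module
  have hlower : ∀ k : ℕ, k * ‖z‖ - ‖w‖ ≤ ‖T^[k] w‖ := by
    intro k
    have hnorm : ‖T^[k] w‖ = ‖μ • w + (k : 𝕜) • z‖ := by
      simpa only [norm_smul, norm_pow, hμ, one_pow, one_mul] using congrArg norm (horbit k)
    rw [hnorm]
    calc k * ‖z‖ - ‖w‖ = ‖(k : 𝕜) • z‖ - ‖μ • w‖ := by simp [norm_smul, hμ]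
      _ ≤ ‖μ • w + (k : 𝕜) • z‖ := by
        have := norm_sub_le (μ • w + (k : 𝕜) • z) (μ • w)
        rw [add_sub_cancel_left] at this
        linarith
  refine not_isRecurrentVec_of_tendsto_norm_atTop (tendsto_atTop_mono hlower ?_)
  exact tendsto_atTop_add_const_right _ _
    (tendsto_natCast_atTop_atTop.atTop_mul_const (norm_pos_iff.2 hz0))

theorem DirectSum.IsInternal.exists_commute_projections {R M ι : Type*} [Semiring R]
    [AddCommMonoid M] [Module R M] [DecidableEq ι] {A : ι → Submodule R M}
    (h : DirectSum.IsInternal A) {T : Module.End R M} (hT : ∀ i, Set.MapsTo T (A i) (A i)) :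
    ∃ P : ι → Module.End R M, (∀ i x, P i x ∈ A i) ∧ (∀ i, Commute (P i) T) ∧
      ∀ x, ∃ s : Finset ι, ∑ i ∈ s, P i x = x := by
  classical
  let := h.chooseDecomposition
  refine ⟨fun i => (A i).subtype ∘ₗ DirectSum.component R ι (fun i => A i) i ∘ₗ
    (DirectSum.decomposeLinearEquiv A).toLinearMap, fun i x => Submodule.coe_mem _,
    fun i => ?_, fun x => ⟨_, DirectSum.sum_support_decompose A x⟩⟩
  refine DirectSum.decompose_lhom_ext A fun j => LinearMap.ext fun x => ?_
  change (DirectSum.decompose A (T x) i : M) = T (DirectSum.decompose A (x : M) i)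
  rcases eq_or_ne j i with rfl | hji
  · rw [DirectSum.decompose_of_mem_same A (hT j x.2), DirectSum.decompose_of_mem_same A x.2]
  · rw [DirectSum.decompose_of_mem_ne A (hT j x.2) hji, DirectSum.decompose_of_mem_ne A x.2 hji,
      map_zero]

section Complex

open Module.End

variable {V : Type*} [NormedAddCommGroup V] [NormedSpace ℂ V] [FiniteDimensional ℂ V]
  {T : V →ₗ[ℂ] V}

theorem IsRecurrentVec.map_of_commute {x : V} (hx : IsRecurrentVec T x) {L : V →ₗ[ℂ] V}
    (hL : Commute L T) : IsRecurrentVec T (L x) :=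
  hx.semiconj L.continuous_of_finiteDimensional fun v => LinearMap.congr_fun hL.eq v

theorem IsRecurrentVec.apply_eq_smul_of_mem_maxGenEigenspace {μ : ℂ} {y : V}
    (hy : IsRecurrentVec T y) (hmem : y ∈ maxGenEigenspace T μ) : T y = μ • y := by
  set N : Module.End ℂ V := T - μ • 1 with hN
  have hNT : Commute N T := (Commute.refl T).sub_left ((Commute.one_left T).smul_left μ)
  have hTN : ∀ v, T v = μ • v + N v := fun v => by simp [hN]
  -- Each `N ^ j y` is recurrent as `N` commutes with `T`, and a Jordan chain
  -- `N ^ j y ↦ N ^ (j + 1) y ↦ 0` of recurrent vectors must end in `N ^ (j + 1) y = 0`.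
  have shorten : ∀ j, (N ^ (j + 2)) y = 0 → (N ^ (j + 1)) y = 0 := by
    intro j hj
    by_contra hz0
    have hTz : T ((N ^ (j + 1)) y) = μ • (N ^ (j + 1)) y := by
      rw [hTN, ← Module.End.mul_apply, ← pow_succ', hj, add_zero]
    have hTw : T ((N ^ j) y) = μ • (N ^ j) y + (N ^ (j + 1)) y := by
      rw [hTN, ← Module.End.mul_apply, ← pow_succ']
    have hμ := (hy.map_of_commute (hNT.pow_left (j + 1))).norm_eq_one_of_apply_eq_smul hTz hz0
    exact not_isRecurrentVec_of_apply_eq_smul_add hμ hTz hTw hz0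
      (hy.map_of_commute (hNT.pow_left j))
  have descend : ∀ j, (N ^ (j + 1)) y = 0 → N y = 0 := by
    intro j
    induction j with
    | zero => simp
    | succ j ih => exact fun h => ih (shorten j h)
  obtain ⟨k, hk⟩ := (mem_maxGenEigenspace T μ y).1 hmem
  have : N y = 0 := by
    cases k with
    | zero => simp_all
    | succ k => exact descend k hk
  simpa [this] using hTN y

theorem IsRecurrentVec.mem_iSup_eigenspace {x : V} (hx : IsRecurrentVec T x) :
    x ∈ ⨆ μ ∈ {μ : ℂ | ‖μ‖ = 1}, eigenspace T μ := by
  classical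
  obtain ⟨P, hPmem, hPT, hsum⟩ :=
    (DirectSum.isInternal_submodule_of_iSupIndep_of_iSup_eq_top (independent_maxGenEigenspace T)
      (iSup_maxGenEigenspace_eq_top T)).exists_commute_projections
      fun μ => mapsTo_maxGenEigenspace_of_comm (Commute.refl T) μ
  obtain ⟨s, hs⟩ := hsum x
  rw [← hs]
  refine Submodule.sum_mem _ fun μ _ => ?_
  by_cases h0 : P μ x = 0
  · rw [h0]
    exact Submodule.zero_mem _
  have hrec := hx.map_of_commute (hPT μ)
  have heig := hrec.apply_eq_smul_of_mem_maxGenEigenspace (hPmem μ x)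
  exact Submodule.mem_iSup_of_mem μ (Submodule.mem_iSup_of_mem
    (hrec.norm_eq_one_of_apply_eq_smul heig h0) (mem_eigenspace_iff.2 heig))

theorem iSup_eigenspace_eq_top_of_dense_isRecurrentVec (h : Dense {x : V | IsRecurrentVec T x}) :
    ⨆ μ ∈ {μ : ℂ | ‖μ‖ = 1}, eigenspace T μ = ⊤ := by
  refine Submodule.eq_top_iff'.2 fun x => ?_
  have hclosed := Submodule.closed_of_finiteDimensional (⨆ μ ∈ {μ : ℂ | ‖μ‖ = 1}, eigenspace T μ)
  exact hclosed.closure_subset_iff.2 (fun y hy => IsRecurrentVec.mem_iSup_eigenspace hy) (h x)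

end Complex

theorem Module.End.exists_linearEquiv_conj_eq_mul_of_iSup_eigenspace_eq_top {K ι : Type*} [Field K]
    [Fintype ι] {T : Module.End K (ι → K)} {s : Set K}
    (h : ⨆ μ ∈ s, eigenspace T μ = ⊤) :
    ∃ S : (ι → K) ≃ₗ[K] (ι → K), ∃ d : ι → K, (∀ i, d i ∈ s) ∧
      ∀ x, S.symm (T (S x)) = fun i => d i * x i := by
  classical
  let A : s → Submodule K (ι → K) := fun μ => eigenspace T μ
  have hint : DirectSum.IsInternal A :=
    DirectSum.isInternal_submodule_of_iSupIndep_of_iSup_eq_top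
      ((eigenspaces_iSupIndep T).comp Subtype.val_injective) ((iSup_subtype'' s _).trans h)
  let b := hint.collectedBasis fun μ => Module.finBasis K (A μ)
  let e := b.indexEquiv (Pi.basisFun K ι)
  let d : ι → K := fun i => (e.symm i).1
  have heig : ∀ i, T (b (e.symm i)) = d i • b (e.symm i) := fun i =>
    mem_eigenspace_iff.1 (hint.collectedBasis_mem _ (e.symm i))
  refine ⟨(b.reindex e).equivFun.symm, d, fun i => (e.symm i).1.2, fun x => ?_⟩
  apply (b.reindex e).equivFun.symm.injective
  simp only [LinearEquiv.symm_symm, LinearEquiv.symm_apply_apply, Module.Basis.equivFun_symm_apply,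
    Module.Basis.reindex_apply, map_sum, map_smul, heig, smul_smul, mul_comm]

theorem isIPStarRecurrentVec_of_conj_eq_mul {ι V : Type*} [Fintype ι] [NormedAddCommGroup V]
    [NormedSpace ℂ V] {T : V →ₗ[ℂ] V} (S : (ι → ℂ) ≃ₗ[ℂ] V) (d : ι → ℂ) (hd : ∀ i, ‖d i‖ = 1)
    (hS : ∀ x, S.symm (T (S x)) = fun i => d i * x i) (x : V) : IsIPStarRecurrentVec T x := by
  intro U hU
  let c : ι → Circle := fun i => ⟨d i, mem_sphere_zero_iff_norm.2 (hd i)⟩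
  let Φ : (ι → Circle) → V := fun g => S fun i => g i * S.symm x i
  have hΦ : Continuous Φ := S.toLinearMap.continuous_of_finiteDimensional.comp <|
    continuous_pi fun i => (continuous_subtype_val.comp (continuous_apply i)).mul continuous_const
  have hsemi : Function.Semiconj Φ (· * c) T := fun g => by
    rw [eq_comm, ← S.symm_apply_eq, hS]
    funext i
    change d i * (g i * S.symm x i) = g i * d i * S.symm x i
    ring
  have hΦ1 : Φ 1 = x := by simp [Φ]
  have horbit : ∀ m, T^[m] x = Φ (c ^ m) := fun m => by
    rw [← hΦ1, ← hsemi.iterate_right m 1, mul_right_iterate_apply_one]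
  refine (isIPStarSet_pow_mem_nhds_one c (hΦ.continuousAt.preimage_mem_nhds (hΦ1 ▸ hU))).mono
    fun m hm => ?_
  change T^[m] x ∈ U
  rw [horbit]
  exact hm

theorem stmt19_general (n : ℕ) (T : (Fin n → ℂ) →ₗ[ℂ] (Fin n → ℂ)) :
    [Dense {x : Fin n → ℂ | IsRecurrentVec (⇑T) x},
     Dense {x : Fin n → ℂ | IsUniformlyRecurrentVec (⇑T) x},
     Dense {x : Fin n → ℂ | IsIPStarRecurrentVec (⇑T) x},
     ∃ S : (Fin n → ℂ) ≃ₗ[ℂ] (Fin n → ℂ), ∃ d : Fin n → ℂ,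
       (∀ i, ‖d i‖ = 1) ∧
       ∀ x : Fin n → ℂ, S.symm (T (S x)) = fun i => d i * x i].TFAE ∧
    (Dense {x : Fin n → ℂ | IsRecurrentVec (⇑T) x} →
      ∀ x : Fin n → ℂ, IsIPStarRecurrentVec (⇑T) x) := by
  have diag_of_dense : Dense {x | IsRecurrentVec T x} → ∃ S : (Fin n → ℂ) ≃ₗ[ℂ] (Fin n → ℂ),
      ∃ d : Fin n → ℂ, (∀ i, ‖d i‖ = 1) ∧ ∀ x : Fin n → ℂ, S.symm (T (S x)) = fun i => d i * x i :=
    fun h => Module.End.exists_linearEquiv_conj_eq_mul_of_iSup_eigenspace_eq_top (T := T)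
      (iSup_eigenspace_eq_top_of_dense_isRecurrentVec h)
  refine ⟨?_, fun h => ?_⟩
  · tfae_have 1 → 4 := diag_of_dense
    tfae_have 4 → 3 := fun ⟨S, d, hd, hS⟩ => by
      simp [isIPStarRecurrentVec_of_conj_eq_mul S d hd hS]
    tfae_have 3 → 2 := Dense.mono fun x hx U hU => (hx U hU).syndetic
    tfae_have 2 → 1 := Dense.mono fun x hx U hU => (hx U hU).infinite
    tfae_finish
  · obtain ⟨S, d, hd, hS⟩ := diag_of_dense h
    exact isIPStarRecurrentVec_of_conj_eq_mul S d hd hS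

theorem stmt19 (n : ℕ) (hn : 1 ≤ n) (T : (Fin n → ℂ) →ₗ[ℂ] (Fin n → ℂ)) :
    [Dense {x : Fin n → ℂ | IsRecurrentVec (⇑T) x},
     Dense {x : Fin n → ℂ | IsUniformlyRecurrentVec (⇑T) x},
     Dense {x : Fin n → ℂ | IsIPStarRecurrentVec (⇑T) x},
     ∃ S : (Fin n → ℂ) ≃ₗ[ℂ] (Fin n → ℂ), ∃ d : Fin n → ℂ,
       (∀ i, ‖d i‖ = 1) ∧
       ∀ x : Fin n → ℂ, S.symm (T (S x)) = fun i => d i * x i].TFAE ∧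
    (Dense {x : Fin n → ℂ | IsRecurrentVec (⇑T) x} →
      ∀ x : Fin n → ℂ, IsIPStarRecurrentVec (⇑T) x) :=
  stmt19_general n T
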